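/- In the EQ gadget transition system, the gadget state 'variable value set' (gate A_3 open or gate A_4 open) is reachable from a given state only if that state is enabled (A_1, A_2, S_1, S_2 all open). Moreover, from an enabled state, setting the variable to positive (opening A_3) and setting it to negative (opening A_4) are mutually exclusive: after either action the gadget is disabled and the other action is unreachable until the gadget is re-enabled. -/
import Mathlib


/-- State of the EQ gadget: positions (open = `true`) of the two Selector
gates `S_1, S_2` and the four AUT gates `A_1, …, A_4`. -/
structure EQState where
  s1 : Bool
  s2 : Bool
  a1 : Bool
  a2 : Bool
  a3 : Bool
  a4 : Bool
deriving DecidableEq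

/-- The player's available actions: fire a bird into the traverse path of
`A_1` or of `A_2`. -/
inductive EQAction | fireA1 | fireA2
deriving DecidableEq

open EQAction

/-- Transition function of the EQ gadget.  Traversing `A_1` (possible only
when `A_1` is open) closes `A_1`; its exit then passes through `S_1`
(possible only when `S_1` is open), closing `S_2` and opening `A_3`.
Traversing `A_2` (possible only when `A_2` is open) closes `A_2` and `S_1`;
its exit then passes through `S_2` (possible only when `S_2` is open),
opening `A_4`. -/
def eqStep (st : EQState) : EQAction → EQState
  | fireA1 =>
      if st.a1 then
        if st.s1 then { st with a1 := false, s2 := false, a3 := true }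
        else { st with a1 := false }
      else st
  | fireA2 =>
      if st.a2 then
        if st.s2 then { st with a2 := false, s1 := false, a4 := true }
        else { st with a2 := false, s1 := false }
      else st

/-- Run a sequence of player actions. -/
def eqRun (l : List EQAction) (st : EQState) : EQState := l.foldl eqStep st

/-- The EQ gadget is enabled when `A_1`, `A_2`, `S_1`, `S_2` are all open. -/
def eqEnabled (st : EQState) : Prop :=
  st.a1 = true ∧ st.a2 = true ∧ st.s1 = true ∧ st.s2 = true

/-- The variable value has been set when `A_3` is open or `A_4` is open. -/
def eqSet (st : EQState) : Prop := st.a3 = true ∨ st.a4 = true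

lemma eqRun_inv (P : EQState → Prop) (h : ∀ st a, P st → P (eqStep st a)) :
    ∀ l st, P st → P (eqRun l st) := by
  intro l
  induction l with
  | nil => intro st hp; exact hp
  | cons a t ih => intro st hp; exact ih _ (h st a hp)

lemma inv1 : ∀ st a, (st.a2 = false ∧ st.s1 = false ∧ st.a3 = false ∧ st.a4 = false) →
    ((eqStep st a).a2 = false ∧ (eqStep st a).s1 = false ∧ (eqStep st a).a3 = false ∧ (eqStep st a).a4 = false) := by
  rintro ⟨s1, s2, a1, a2, a3, a4⟩ a hp
  cases a <;> simp [eqStep] <;> split_ifs <;> simp_all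

lemma inv2 : ∀ st a, (st.a1 = false ∧ st.s2 = false ∧ st.a3 = false ∧ st.a4 = false) →
    ((eqStep st a).a1 = false ∧ (eqStep st a).s2 = false ∧ (eqStep st a).a3 = false ∧ (eqStep st a).a4 = false) := by
  rintro ⟨s1, s2, a1, a2, a3, a4⟩ a hp
  cases a <;> simp [eqStep] <;> split_ifs <;> simp_all

lemma inv3 : ∀ st a, (st.s2 = false ∧ st.a4 = false) →
    ((eqStep st a).s2 = false ∧ (eqStep st a).a4 = false) := by
  rintro ⟨s1, s2, a1, a2, a3, a4⟩ a hp
  cases a <;> simp [eqStep] <;> split_ifs <;> simp_all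

lemma inv4 : ∀ st a, (st.s1 = false ∧ st.a3 = false) →
    ((eqStep st a).s1 = false ∧ (eqStep st a).a3 = false) := by
  rintro ⟨s1, s2, a1, a2, a3, a4⟩ a hp
  cases a <;> simp [eqStep] <;> split_ifs <;> simp_all

/-- In the EQ gadget: (1) from a state respecting the gadget's wiring
invariants (`A_2` and `S_1` in the same position, `A_1` and `S_2` in the
same position) in which the variable value is not yet set, the set state is
reachable only if the state is enabled; and (2) from an enabled state the
two settings are mutually exclusive: firing into `A_1` (setting the
variable positive, opening `A_3`) leaves the gadget disabled and `A_4`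
unreachable by any further actions, and symmetrically for `A_2`. -/
theorem stmt_6 :
    (∀ st : EQState, st.a2 = st.s1 → st.a1 = st.s2 → ¬ eqSet st →
      (∃ l : List EQAction, eqSet (eqRun l st)) → eqEnabled st) ∧
    (∀ st : EQState, eqEnabled st → st.a3 = false → st.a4 = false →
      (¬ eqEnabled (eqStep st fireA1) ∧ (eqStep st fireA1).a3 = true ∧
        ∀ l : List EQAction, (eqRun l (eqStep st fireA1)).a4 = false) ∧
      (¬ eqEnabled (eqStep st fireA2) ∧ (eqStep st fireA2).a4 = true ∧
        ∀ l : List EQAction, (eqRun l (eqStep st fireA2)).a3 = false)) := by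
  constructor
  · rintro st h21 h12 hns ⟨l, hl⟩
    by_contra hne
    rcases st with ⟨s1, s2, a1, a2, a3, a4⟩
    simp [eqSet] at hns hl
    simp [eqEnabled] at hne h21 h12 ⊢
    -- from constraints, ¬enabled means a1 = false or a2 = false
    cases h2 : a2 with
    | false =>
      have := eqRun_inv _ inv1 l ⟨s1, s2, a1, a2, a3, a4⟩
        ⟨h2, by simp [← h21, h2], hns.1, hns.2⟩
      rcases hl with h | h <;> simp_all
    | true =>
      cases h1 : a1 with
      | false =>
        have := eqRun_inv _ inv2 l ⟨s1, s2, a1, a2, a3, a4⟩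
          ⟨h1, by simp [← h12, h1], hns.1, hns.2⟩
        rcases hl with h | h <;> simp_all
      | true => have := hne h1 h2 (h21 ▸ h2); simp_all
  · rintro ⟨s1, s2, a1, a2, a3, a4⟩ ⟨e1, e2, e3, e4⟩ h3 h4
    simp at e1 e2 e3 e4 h3 h4
    subst e1 e2 e3 e4 h3 h4
    refine ⟨⟨?_, ?_, ?_⟩, ?_, ?_, ?_⟩
    · simp [eqStep, eqEnabled]
    · simp [eqStep]
    · intro l
      exact (eqRun_inv _ inv3 l _ (by simp [eqStep])).2
    · simp [eqStep, eqEnabled]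
    · simp [eqStep]
    · intro l
      exact (eqRun_inv _ inv4 l _ (by simp [eqStep])).2
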